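/- arXiv:math/0505433 — 2 statements merged into one kernel-verified Lean document; each statement's English description precedes it below -/
import Mathlib

section
/- Every nonzero formal power series f(X) ∈ ℤ_p[[X]] can be written uniquely in the form f(X) = p^μ · g(X) · u(X), where μ is a non-negative integer, g(X) is a distinguished polynomial, and u(X) is a unit of the ring ℤ_p[[X]]. -/
/-- A polynomial `g` over `ℤ_p` is *distinguished* if it is monic and all of its
coefficients except the leading one are divisible by `p`. -/
def IsDistinguished (p : ℕ) [Fact p.Prime] (g : Polynomial ℤ_[p]) : Prop :=
  g.Monic ∧ ∀ i < g.natDegree, (p : ℤ_[p]) ∣ g.coeff i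

/-!
Since `ℤ_p⟦X⟧` is a Noetherian domain and `p` is not a unit, `f = p^μ · f₁` with `p ∤ f₁`,
i.e. with `f₁` nonzero modulo `p`. The Weierstrass preparation theorem over the complete local ring
`ℤ_p` then writes `f₁` as a distinguished polynomial times a unit. Conversely such a product is
nonzero modulo `p`, so in any decomposition `μ` is the multiplicity of `p` in `f`; cancelling
`p^μ` reduces uniqueness to that of the Weierstrass factorization of `f₁`.
-/

open PowerSeries IsLocalRing PadicInt

theorem multiplicity_pow_mul_of_not_dvd {α : Type*} [CommMonoidWithZero α] [IsCancelMulZero α]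
    {a b : α} (ha : a ≠ 0) (hb : ¬a ∣ b) (n : ℕ) : multiplicity a (a ^ n * b) = n :=
  multiplicity_eq_of_dvd_of_not_dvd (dvd_mul_right _ _) <| by
    rwa [pow_succ, mul_dvd_mul_iff_left (pow_ne_zero n ha)]

theorem eq_of_pow_mul_eq_pow_mul {α : Type*} [CommMonoidWithZero α] [IsCancelMulZero α]
    {a b c : α} {m n : ℕ} (ha : a ≠ 0) (hb : ¬a ∣ b) (hc : ¬a ∣ c)
    (h : a ^ m * b = a ^ n * c) : m = n ∧ b = c := by
  obtain rfl : m = n := by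
    rw [← multiplicity_pow_mul_of_not_dvd ha hb m, h, multiplicity_pow_mul_of_not_dvd ha hc n]
  exact ⟨rfl, mul_left_cancel₀ (pow_ne_zero m ha) h⟩

theorem Polynomial.isDistinguishedAt_span_singleton_iff {R : Type*} [CommRing R] {a : R}
    {g : Polynomial R} :
    g.IsDistinguishedAt (Ideal.span {a}) ↔ g.Monic ∧ ∀ i < g.natDegree, a ∣ g.coeff i := by
  simp_rw [← Ideal.mem_span_singleton]
  exact ⟨fun h ↦ ⟨h.monic, fun _ hi ↦ h.mem hi⟩, fun h ↦ ⟨⟨h.2 _⟩, h.1⟩⟩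

namespace PowerSeries

theorem C_dvd_iff_dvd_coeff {R : Type*} [CommSemiring R] (r : R) (φ : R⟦X⟧) :
    C r ∣ φ ↔ ∀ i, r ∣ coeff i φ := by
  refine ⟨fun ⟨ψ, hψ⟩ i ↦ ⟨coeff i ψ, by rw [hψ, coeff_C_mul]⟩, fun h ↦ ?_⟩
  choose ψ hψ using h
  exact ⟨mk ψ, ext fun i ↦ by rw [coeff_C_mul, coeff_mk, hψ]⟩

theorem map_mk_span_singleton_eq_zero_iff {R : Type*} [CommRing R] (a : R) (φ : R⟦X⟧) :
    φ.map (Ideal.Quotient.mk (Ideal.span {a})) = 0 ↔ C a ∣ φ := by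
  simp [C_dvd_iff_dvd_coeff, PowerSeries.ext_iff, Ideal.Quotient.eq_zero_iff_mem,
    Ideal.mem_span_singleton]

end PowerSeries

namespace PadicInt

variable {p : ℕ} [Fact p.Prime]

theorem isDistinguishedAt_maximalIdeal_iff {g : Polynomial ℤ_[p]} :
    g.IsDistinguishedAt (maximalIdeal ℤ_[p]) ↔ IsDistinguished p g := by
  rw [maximalIdeal_eq_span_p, Polynomial.isDistinguishedAt_span_singleton_iff, IsDistinguished]

theorem powerSeries_map_residue_eq_zero_iff (φ : ℤ_[p]⟦X⟧) :
    φ.map (residue ℤ_[p]) = 0 ↔ (p : ℤ_[p]⟦X⟧) ∣ φ := by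
  rw [← map_natCast C, ← map_mk_span_singleton_eq_zero_iff, ← maximalIdeal_eq_span_p]
  rfl

theorem natCast_powerSeries_ne_zero : (p : ℤ_[p]⟦X⟧) ≠ 0 := by
  rw [← map_natCast C, ne_eq, map_eq_zero_iff _ C_injective]
  exact prime_p.ne_zero

theorem not_isUnit_natCast_powerSeries : ¬IsUnit (p : ℤ_[p]⟦X⟧) := by
  rw [isUnit_iff_constantCoeff, map_natCast]
  exact prime_p.not_isUnit

end PadicInt

/-- **p-adic Weierstrass preparation theorem.**  Every nonzero formal power series
`f(X) ∈ ℤ_p[[X]]` can be written uniquely as `f = p^μ · g(X) · u(X)` with `μ` a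
non-negative integer, `g` a distinguished polynomial and `u` a unit of `ℤ_p[[X]]`. -/
theorem padic_weierstrass_preparation (p : ℕ) [Fact p.Prime]
    (f : PowerSeries ℤ_[p]) (hf : f ≠ 0) :
    ∃! w : ℕ × Polynomial ℤ_[p] × (PowerSeries ℤ_[p])ˣ,
      IsDistinguished p w.2.1 ∧
        f = (p : PowerSeries ℤ_[p]) ^ w.1 * (w.2.1 : PowerSeries ℤ_[p]) *
          (w.2.2 : PowerSeries ℤ_[p]) := by
  obtain ⟨μ, f₁, hf₁, rfl⟩ :=
    WfDvdMonoid.max_power_factor' hf not_isUnit_natCast_powerSeries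
  obtain ⟨g, u, H⟩ :=
    exists_isWeierstrassFactorization ((powerSeries_map_residue_eq_zero_iff f₁).not.2 hf₁)
  refine ⟨(μ, g, H.isUnit.unit),
    ⟨isDistinguishedAt_maximalIdeal_iff.1 H.isDistinguishedAt, ?_⟩, ?_⟩
  · rw [mul_assoc]
    exact congrArg _ H.eq_mul
  rintro ⟨μ', g', u'⟩ ⟨hg', heq⟩
  have H' : (g' * u' : ℤ_[p]⟦X⟧).IsWeierstrassFactorization g' u' :=
    ⟨isDistinguishedAt_maximalIdeal_iff.2 hg', u'.isUnit, rfl⟩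
  rw [mul_assoc] at heq
  obtain ⟨rfl, rfl⟩ := eq_of_pow_mul_eq_pow_mul natCast_powerSeries_ne_zero hf₁
    ((powerSeries_map_residue_eq_zero_iff _).not.1 H'.map_ne_zero) heq
  obtain ⟨rfl, hu⟩ := H'.elim H
  exact Prod.ext rfl (Prod.ext rfl (Units.ext hu))
end

section
/- Let g(X) ∈ ℤ_p[X] be a distinguished polynomial of degree λ such that g(ζ − 1) ≠ 0 for every p-power root of unity ζ ≠ 1. Then there is an integer C, independent of m, such that for all sufficiently large m one has ord_p( ∏_{ζ^{p^m} = 1, ζ ≠ 1} g(ζ − 1) ) = λ·m + C, where the product runs over all p^m-th roots of unity ζ ≠ 1 in the field ℚ_p(ζ_{p^m}) obtained by adjoining a primitive p^m-th root of unity to ℚ_p. -/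
noncomputable def ordp (p : ℕ) {K : Type*} [NormedField K] (x : K) : ℝ :=
  -Real.logb p ‖x‖

noncomputable def Polynomial.evalPadic (p : ℕ) [Fact p.Prime] {K : Type*}
    [NormedField K] [NormedAlgebra ℚ_[p] K] (g : Polynomial ℤ_[p]) (x : K) : K :=
  Polynomial.eval x (g.map ((algebraMap ℚ_[p] K).comp (PadicInt.Coe.ringHom)))

/-!
Over a finite extension of `ℚ_p` the norm is the spectral norm, so `‖x‖ ^ deg x = ‖c₀‖` where `c₀`
is the constant term of the minimal polynomial of `x`. As `Φ_{p^k}(X + 1)` is Eisenstein, it is the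
minimal polynomial of `ζ - 1` for every primitive `p^k`-th root of unity `ζ`, in every extension.
Hence all `g(ζ - 1)` of level `k` have the same norm, `φ(p^k) · ord_p (ζ - 1) = 1`, and
`φ(p^k) · ord_p g(ζ - 1)` is an integer. Once `φ(p^k) > λ`, the monomial `(ζ - 1)^λ` dominates the
other terms of `g(ζ - 1)`, so level `k` contributes exactly `λ`. Sorting the `p^m`-th roots of unity
`ζ ≠ 1` by level gives `λ (m - λ)` from the levels `k > λ`, plus the contribution of the levels
`k ≤ λ`, which does not depend on `m` or on the field and can be computed in a fixed extension
containing a primitive `p^λ`-th root of unity.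
-/

open Polynomial Finset IntermediateField

section Minpoly

variable {F L L' : Type*} [Field F] [Field L] [Field L'] [Algebra F L] [Algebra F L']

theorem minpoly_aeval_eq_of_minpoly_eq {x : L} {y : L'} (hx : IsIntegral F x)
    (h : minpoly F x = minpoly F y) (q : F[X]) :
    minpoly F (aeval x q) = minpoly F (aeval y q) := by
  let B := adjoin.powerBasis hx
  let φ : F⟮x⟯ →ₐ[F] L' := B.lift y (by
    rw [adjoin.powerBasis_gen, minpoly_gen, h]
    exact minpoly.aeval F y)
  have hφ : φ (aeval B.gen q) = aeval y q := by
    rw [← aeval_algHom_apply, PowerBasis.lift_gen]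
  rw [← hφ, minpoly.algHom_eq φ φ.injective, ← minpoly.algHom_eq (val _)
    Subtype.val_injective, ← aeval_algHom_apply]
  rfl

theorem minpoly_natDegree_aeval_dvd {x : L} (hx : IsIntegral F x) (q : F[X]) :
    (minpoly F (aeval x q)).natDegree ∣ (minpoly F x).natDegree := by
  have := adjoin.finiteDimensional hx
  have hval : aeval x q = F⟮x⟯.val (aeval (AdjoinSimple.gen F x) q) := by
    rw [← aeval_algHom_apply]; rfl
  rw [← adjoin.finrank hx, hval, minpoly.algHom_eq _ Subtype.val_injective]
  exact minpoly.degree_dvd (Algebra.IsIntegral.isIntegral _)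

end Minpoly

section SpectralNorm

variable {K : Type*} [NontriviallyNormedField K] [CompleteSpace K] [IsUltrametricDist K]
  {L L' : Type*} [NormedField L] [NormedAlgebra K L] [Algebra.IsAlgebraic K L]
  [NormedField L'] [NormedAlgebra K L'] [Algebra.IsAlgebraic K L']

theorem norm_pow_natDegree_minpoly (x : L) :
    ‖x‖ ^ (minpoly K x).natDegree = ‖(minpoly K x).coeff 0‖ := by
  rw [NormedAlgebra.norm_eq_spectralNorm K, spectralNorm.spectralNorm_eq_norm_coeff_zero_rpow,
    ← Real.rpow_natCast, ← Real.rpow_mul (norm_nonneg _), one_div,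
    inv_mul_cancel₀ (mod_cast (minpoly.natDegree_pos (Algebra.IsIntegral.isIntegral x)).ne'),
    Real.rpow_one]

theorem norm_eq_of_minpoly_eq {x : L} {y : L'} (h : minpoly K x = minpoly K y) :
    ‖x‖ = ‖y‖ := by
  rw [NormedAlgebra.norm_eq_spectralNorm K, NormedAlgebra.norm_eq_spectralNorm K, spectralNorm,
    spectralNorm, h]

end SpectralNorm

section ordp

variable {p : ℕ} {K : Type*} [NormedField K]

theorem ordp_pow (x : K) (n : ℕ) : ordp p (x ^ n) = n * ordp p x := by
  rw [ordp, ordp, norm_pow, Real.logb_pow, mul_neg]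

theorem ordp_prod {ι : Type*} (s : Finset ι) (f : ι → K) (hf : ∀ i ∈ s, f i ≠ 0) :
    ordp p (∏ i ∈ s, f i) = ∑ i ∈ s, ordp p (f i) := by
  rw [ordp, norm_prod, Real.logb_prod _ _ fun i hi => norm_ne_zero_iff.2 (hf i hi),
    ← sum_neg_distrib]
  rfl

theorem Padic.ordp_eq_valuation [Fact p.Prime] {x : ℚ_[p]} (hx : x ≠ 0) :
    ordp p x = x.valuation := by
  have hp : (1 : ℝ) < p := mod_cast (Fact.out : p.Prime).one_lt
  rw [ordp, Padic.norm_eq_zpow_neg_valuation hx, ← Real.rpow_intCast,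
    Real.logb_rpow (by positivity) hp.ne', Int.cast_neg, neg_neg]

end ordp

theorem natDegree_minpoly_mul_ordp {p : ℕ} [Fact p.Prime] {K : Type*} [NormedField K]
    [NormedAlgebra ℚ_[p] K] [Algebra.IsAlgebraic ℚ_[p] K] {x : K} (hx : x ≠ 0) :
    (minpoly ℚ_[p] x).natDegree * ordp p x = ((minpoly ℚ_[p] x).coeff 0).valuation := by
  rw [← ordp_pow, ordp, norm_pow, norm_pow_natDegree_minpoly, ← ordp, Padic.ordp_eq_valuation
    (minpoly.coeff_zero_ne_zero (Algebra.IsIntegral.isIntegral x) hx)]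

section Cyclotomic

variable {p : ℕ} [Fact p.Prime]

theorem monic_cyclotomic_comp_X_add_one (n : ℕ) (R : Type*) [CommRing R] [Nontrivial R] :
    ((cyclotomic n R).comp (X + 1)).Monic := by
  simpa using (cyclotomic.monic n R).comp_X_add_C 1

theorem natDegree_cyclotomic_comp_X_add_one (n : ℕ) (R : Type*) [CommRing R] [IsDomain R] :
    ((cyclotomic n R).comp (X + 1)).natDegree = n.totient := by
  rw [natDegree_comp, natDegree_cyclotomic, ← C_1, natDegree_X_add_C, mul_one]

theorem PadicInt.cyclotomic_prime_pow_comp_X_add_one_isEisensteinAt (n : ℕ) :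
    ((cyclotomic (p ^ (n + 1)) ℤ_[p]).comp (X + 1)).IsEisensteinAt (Ideal.span {(p : ℤ_[p])}) := by
  have hE := _root_.cyclotomic_prime_pow_comp_X_add_one_isEisensteinAt p n
  have hmap : (cyclotomic (p ^ (n + 1)) ℤ_[p]).comp (X + 1) =
      ((cyclotomic (p ^ (n + 1)) ℤ).comp (X + 1)).map (Int.castRingHom ℤ_[p]) := by
    simp [Polynomial.map_comp]
  refine (monic_cyclotomic_comp_X_add_one _ _).isEisensteinAt_of_mem_of_notMem
    ((Ideal.span_singleton_prime PadicInt.prime_p.ne_zero).2 PadicInt.prime_p).ne_top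
    (fun {i} hi => ?_) ?_
  · rw [hmap, (monic_cyclotomic_comp_X_add_one _ ℤ).natDegree_map] at hi
    rw [hmap, coeff_map, Ideal.mem_span_singleton]
    simpa using map_dvd (Int.castRingHom ℤ_[p]) (Ideal.mem_span_singleton.1 (hE.mem hi))
  · rw [coeff_zero_eq_eval_zero, eval_comp]
    simp only [eval_add, eval_X, eval_one, zero_add, eval_one_cyclotomic_prime_pow]
    rw [Ideal.span_singleton_pow, Ideal.mem_span_singleton, pow_two]
    intro h
    exact PadicInt.prime_p.not_dvd_one
      ((mul_dvd_mul_iff_left PadicInt.prime_p.ne_zero).1 (by simpa using h))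

theorem Padic.irreducible_cyclotomic_prime_pow_comp_X_add_one (n : ℕ) :
    Irreducible ((cyclotomic (p ^ (n + 1)) ℚ_[p]).comp (X + 1)) := by
  have hmap : (cyclotomic (p ^ (n + 1)) ℚ_[p]).comp (X + 1) =
      ((cyclotomic (p ^ (n + 1)) ℤ_[p]).comp (X + 1)).map (algebraMap ℤ_[p] ℚ_[p]) := by
    simp [Polynomial.map_comp]
  have hmon := monic_cyclotomic_comp_X_add_one (p ^ (n + 1)) ℤ_[p]
  rw [hmap, ← hmon.irreducible_iff_irreducible_map_fraction_map]
  refine (PadicInt.cyclotomic_prime_pow_comp_X_add_one_isEisensteinAt n).irreducible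
    ((Ideal.span_singleton_prime PadicInt.prime_p.ne_zero).2 PadicInt.prime_p) hmon.isPrimitive ?_
  rw [natDegree_cyclotomic_comp_X_add_one]
  exact Nat.totient_pos.2 (Nat.pos_of_neZero _)

variable {K : Type*} {ζ : K} {k : ℕ}

theorem IsPrimitiveRoot.minpoly_sub_one_padic [Field K] [Algebra ℚ_[p] K]
    (hζ : IsPrimitiveRoot ζ (p ^ k)) (hk : k ≠ 0) :
    minpoly ℚ_[p] (ζ - 1) = (cyclotomic (p ^ k) ℚ_[p]).comp (X + 1) := by
  obtain ⟨n, rfl⟩ := Nat.exists_eq_succ_of_ne_zero hk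
  refine (minpoly.eq_of_irreducible_of_monic
    (Padic.irreducible_cyclotomic_prime_pow_comp_X_add_one n) ?_
    (monic_cyclotomic_comp_X_add_one _ _)).symm
  rw [aeval_comp, map_add, aeval_X, map_one, sub_add_cancel, aeval_def, ← eval_map,
    map_cyclotomic]
  exact hζ.isRoot_cyclotomic (Nat.pos_of_neZero _)

variable [NormedField K] [NormedAlgebra ℚ_[p] K] [Algebra.IsAlgebraic ℚ_[p] K]

theorem IsPrimitiveRoot.norm_sub_one_pow_totient (hζ : IsPrimitiveRoot ζ (p ^ k)) (hk : k ≠ 0) :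
    ‖ζ - 1‖ ^ (p ^ k).totient = (p : ℝ)⁻¹ := by
  have := norm_pow_natDegree_minpoly (K := ℚ_[p]) (ζ - 1)
  rw [hζ.minpoly_sub_one_padic hk, natDegree_cyclotomic_comp_X_add_one, coeff_zero_eq_eval_zero,
    eval_comp, eval_add, eval_X, eval_one, zero_add] at this
  obtain ⟨n, rfl⟩ := Nat.exists_eq_succ_of_ne_zero hk
  rwa [eval_one_cyclotomic_prime_pow, Padic.norm_p] at this

theorem IsPrimitiveRoot.totient_mul_ordp_sub_one (hζ : IsPrimitiveRoot ζ (p ^ k)) (hk : k ≠ 0) :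
    (p ^ k).totient * ordp p (ζ - 1) = 1 := by
  rw [← ordp_pow, ordp, norm_pow, hζ.norm_sub_one_pow_totient hk, Real.logb_inv,
    Real.logb_self_eq_one (mod_cast (Fact.out : p.Prime).one_lt), neg_neg]

end Cyclotomic

theorem Nat.Prime.le_totient_pow {p : ℕ} (hp : p.Prime) (k : ℕ) : k ≤ (p ^ k).totient := by
  rcases k with - | n
  · simp
  rw [Nat.totient_prime_pow_succ hp]
  calc n + 1 ≤ 2 ^ n := Nat.lt_two_pow_self
    _ ≤ p ^ n := Nat.pow_le_pow_left hp.two_le n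
    _ ≤ p ^ n * (p - 1) := Nat.le_mul_of_pos_right _ (Nat.sub_pos_of_lt hp.one_lt)

theorem IsPrimitiveRoot.pow_pow_sub {M : Type*} [CommMonoid M] {ζ : M} {q m k : ℕ}
    (hζ : IsPrimitiveRoot ζ (q ^ m)) (hq : 0 < q) (hk : k ≤ m) :
    IsPrimitiveRoot (ζ ^ q ^ (m - k)) (q ^ k) :=
  hζ.pow (pow_pos hq m) (by rw [← pow_add, Nat.sub_add_cancel hk])

theorem nthRoots_prime_pow_toFinset_erase_one {R : Type*} [CommRing R] [IsDomain R]
    [DecidableEq R] {p : ℕ} (hp : p.Prime) (m : ℕ) :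
    (nthRoots (p ^ m) (1 : R)).toFinset.erase 1 =
      (Ioc 0 m).biUnion fun k => primitiveRoots (p ^ k) R := by
  ext x
  simp only [mem_erase, Multiset.mem_toFinset, mem_nthRoots (pow_pos hp.pos m), mem_biUnion,
    mem_Ioc, mem_primitiveRoots (pow_pos hp.pos _)]
  constructor
  · rintro ⟨hx1, hxm⟩
    obtain ⟨k, hkm, hk⟩ := (Nat.dvd_prime_pow hp).1 (orderOf_dvd_of_pow_eq_one hxm)
    refine ⟨k, ⟨Nat.pos_of_ne_zero ?_, hkm⟩, hk ▸ IsPrimitiveRoot.orderOf x⟩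
    rintro rfl
    exact hx1 (orderOf_eq_one_iff.1 (by simpa using hk))
  · rintro ⟨k, ⟨hk0, hkm⟩, hx⟩
    exact ⟨hx.ne_one (Nat.one_lt_pow hk0.ne' hp.one_lt),
      (hx.pow_eq_one_iff_dvd _).2 (pow_dvd_pow p hkm)⟩

section Evaluation

variable {p : ℕ} [Fact p.Prime] {K : Type*} [NormedField K] [NormedAlgebra ℚ_[p] K]
  {g : ℤ_[p][X]}

theorem Polynomial.evalPadic_eq_aeval (g : ℤ_[p][X]) (x : K) :
    g.evalPadic p x = aeval x (g.map PadicInt.Coe.ringHom) := by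
  rw [evalPadic, ← map_map, eval_map, ← aeval_def]

theorem IsDistinguished.norm_evalPadic_eq (hg : IsDistinguished p g) {π : K} (hπ : ‖π‖ ≤ 1)
    (hlt : (p : ℝ)⁻¹ < ‖π‖ ^ g.natDegree) : ‖g.evalPadic p π‖ = ‖π‖ ^ g.natDegree := by
  have : IsUltrametricDist K := .of_normedAlgebra ℚ_[p]
  set f := (algebraMap ℚ_[p] K).comp PadicInt.Coe.ringHom
  have hsplit : g.evalPadic p π =
      ∑ i ∈ range g.natDegree, f (g.coeff i) * π ^ i + π ^ g.natDegree := by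
    rw [evalPadic, eval_eq_sum_range, hg.1.natDegree_map, sum_range_succ, coeff_map,
      hg.1.coeff_natDegree, map_one, one_mul]
    simp only [coeff_map, f]
  have hlower : ‖∑ i ∈ range g.natDegree, f (g.coeff i) * π ^ i‖ < ‖π ^ g.natDegree‖ := by
    refine lt_of_le_of_lt (IsUltrametricDist.norm_sum_le_of_forall_le_of_nonneg
      (C := (p : ℝ)⁻¹) (by positivity) fun i hi => ?_) (by rwa [norm_pow])
    obtain ⟨c, hc⟩ := hg.2 i (mem_range.1 hi)
    have hf : ‖f (g.coeff i)‖ = ‖g.coeff i‖ := norm_algebraMap' K _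
    rw [norm_mul, norm_pow, hf, hc, norm_mul, PadicInt.norm_p, mul_assoc]
    exact mul_le_of_le_one_right (by positivity)
      (mul_le_one₀ (PadicInt.norm_le_one c) (by positivity) (pow_le_one₀ (norm_nonneg _) hπ))
  rw [hsplit, IsUltrametricDist.norm_add_eq_max_of_norm_ne_norm hlower.ne,
    max_eq_right hlower.le, norm_pow]

end Evaluation

section Levels

variable {p : ℕ} [Fact p.Prime] {K K' : Type*} [NormedField K] [NormedAlgebra ℚ_[p] K]
  [Algebra.IsAlgebraic ℚ_[p] K] [NormedField K'] [NormedAlgebra ℚ_[p] K']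
  [Algebra.IsAlgebraic ℚ_[p] K'] {g : ℤ_[p][X]} {k : ℕ} {ζ : K}

theorem IsPrimitiveRoot.norm_evalPadic_sub_one_eq (hζ : IsPrimitiveRoot ζ (p ^ k)) {ξ : K'}
    (hξ : IsPrimitiveRoot ξ (p ^ k)) (hk : k ≠ 0) (g : ℤ_[p][X]) :
    ‖g.evalPadic p (ζ - 1)‖ = ‖g.evalPadic p (ξ - 1)‖ := by
  rw [evalPadic_eq_aeval, evalPadic_eq_aeval]
  exact norm_eq_of_minpoly_eq (minpoly_aeval_eq_of_minpoly_eq (Algebra.IsIntegral.isIntegral _)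
    (by rw [hζ.minpoly_sub_one_padic hk, hξ.minpoly_sub_one_padic hk]) _)

theorem IsPrimitiveRoot.exists_totient_mul_ordp_evalPadic_eq_intCast
    (hζ : IsPrimitiveRoot ζ (p ^ k)) (hk : k ≠ 0) (h0 : g.evalPadic p (ζ - 1) ≠ 0) :
    ∃ a : ℤ, (p ^ k).totient * ordp p (g.evalPadic p (ζ - 1)) = a := by
  obtain ⟨c, hc⟩ : (minpoly ℚ_[p] (g.evalPadic p (ζ - 1))).natDegree ∣ (p ^ k).totient := by
    have := minpoly_natDegree_aeval_dvd (Algebra.IsIntegral.isIntegral (R := ℚ_[p]) (ζ - 1))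
      (g.map PadicInt.Coe.ringHom)
    rwa [← evalPadic_eq_aeval, hζ.minpoly_sub_one_padic hk,
      natDegree_cyclotomic_comp_X_add_one] at this
  refine ⟨c * ((minpoly ℚ_[p] (g.evalPadic p (ζ - 1))).coeff 0).valuation, ?_⟩
  rw [hc, Nat.cast_mul, mul_right_comm, natDegree_minpoly_mul_ordp h0]
  push_cast
  ring

theorem IsPrimitiveRoot.totient_mul_ordp_evalPadic_of_natDegree_lt (hg : IsDistinguished p g)
    (hζ : IsPrimitiveRoot ζ (p ^ k)) (hk : k ≠ 0) (hlt : g.natDegree < (p ^ k).totient) :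
    (p ^ k).totient * ordp p (g.evalPadic p (ζ - 1)) = g.natDegree := by
  have hp : (1 : ℝ) < p := mod_cast (Fact.out : p.Prime).one_lt
  have hpow := hζ.norm_sub_one_pow_totient hk
  have hlt1 : ‖ζ - 1‖ < 1 := (pow_lt_one_iff_of_nonneg (norm_nonneg _) (by omega)).1
    (hpow ▸ inv_lt_one_of_one_lt₀ hp)
  have hpos : 0 < ‖ζ - 1‖ :=
    norm_pos_iff.2 (sub_ne_zero.2 (hζ.ne_one (Nat.one_lt_pow hk (Fact.out : p.Prime).one_lt)))
  have hord : ordp p (g.evalPadic p (ζ - 1)) = g.natDegree * ordp p (ζ - 1) := by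
    rw [← ordp_pow, ordp, ordp, norm_pow, hg.norm_evalPadic_eq hlt1.le
      (hpow ▸ pow_lt_pow_right_of_lt_one₀ hpos hlt1 hlt)]
  rw [hord, mul_left_comm, hζ.totient_mul_ordp_sub_one hk, mul_one]

theorem IsPrimitiveRoot.ordp_prod_evalPadic_nthRoots_erase_one [DecidableEq K] {m : ℕ} {ζ₀ : K}
    (hζ₀ : IsPrimitiveRoot ζ₀ (p ^ m))
    (hne : ∀ l, 1 ≤ l → ∀ ζ : K, IsPrimitiveRoot ζ (p ^ l) → g.evalPadic p (ζ - 1) ≠ 0) :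
    ordp p (∏ ζ ∈ (nthRoots (p ^ m) (1 : K)).toFinset.erase 1, g.evalPadic p (ζ - 1)) =
      ∑ k ∈ Ioc 0 m, (p ^ k).totient * ordp p (g.evalPadic p (ζ₀ ^ p ^ (m - k) - 1)) := by
  have hp : p.Prime := Fact.out
  have hprim {k : ℕ} {ζ : K} (h : ζ ∈ primitiveRoots (p ^ k) K) : IsPrimitiveRoot ζ (p ^ k) :=
    (mem_primitiveRoots (pow_pos hp.pos k)).1 h
  rw [nthRoots_prime_pow_toFinset_erase_one hp, prod_biUnion fun a _ b _ hab =>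
      IsPrimitiveRoot.disjoint ((Nat.pow_right_injective hp.two_le).ne hab),
    ordp_prod _ _ fun k hk => prod_ne_zero_iff.2 fun ζ hζ => hne k (mem_Ioc.1 hk).1 ζ (hprim hζ)]
  refine sum_congr rfl fun k hk => ?_
  have hk' := hζ₀.pow_pow_sub hp.pos (mem_Ioc.1 hk).2
  rw [ordp_prod _ _ fun ζ hζ => hne k (mem_Ioc.1 hk).1 ζ (hprim hζ), ← hk'.card_primitiveRoots,
    ← nsmul_eq_mul, ← sum_const]
  refine sum_congr rfl fun ζ hζ => ?_
  rw [ordp, ordp, (hprim hζ).norm_evalPadic_sub_one_eq hk' (mem_Ioc.1 hk).1.ne' g]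

end Levels

theorem exists_primitiveRoot_finiteDimensional_normedAlgebra (p : ℕ) [Fact p.Prime] (n : ℕ)
    [NeZero n] :
    ∃ (K : Type) (_ : NormedField K) (_ : NormedAlgebra ℚ_[p] K)
      (_ : FiniteDimensional ℚ_[p] K) (ζ : K), IsPrimitiveRoot ζ n := by
  let L := CyclotomicField n ℚ_[p]
  have := IsCyclotomicExtension.finiteDimensional {n} ℚ_[p] L
  let _ := spectralNorm.normedField ℚ_[p] L
  exact ⟨L, _, spectralNorm.normedAlgebra ℚ_[p] L, inferInstance, _,
    IsCyclotomicExtension.zeta_spec n ℚ_[p] L⟩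

/-- If `g ∈ ℤ_p[X]` is a distinguished polynomial of degree `λ` with `g(ζ - 1) ≠ 0` for
every `p`-power root of unity `ζ ≠ 1`, then there is an integer `C`, independent of `m`,
such that for all sufficiently large `m`,
`ord_p (∏_{ζ^{p^m} = 1, ζ ≠ 1} g(ζ - 1)) = λ·m + C`, the product being taken over all
`p^m`-th roots of unity `ζ ≠ 1` in `ℚ_p(ζ_{p^m})`. -/
theorem ordp_prod_distinguished_eval (p : ℕ) [Fact p.Prime] (g : Polynomial ℤ_[p])
    (lam : ℕ) (hg : IsDistinguished p g) (hdeg : g.natDegree = lam)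
    (hne : ∀ (K : Type) [NormedField K] [NormedAlgebra ℚ_[p] K] [FiniteDimensional ℚ_[p] K]
      (l : ℕ), 1 ≤ l → ∀ ζ : K, IsPrimitiveRoot ζ (p ^ l) →
        Polynomial.evalPadic p g (ζ - 1) ≠ 0) :
    ∃ C : ℤ, ∃ m₀ : ℕ, ∀ m, m₀ ≤ m →
      ∀ (K : Type) [NormedField K] [NormedAlgebra ℚ_[p] K] [FiniteDimensional ℚ_[p] K]
        [DecidableEq K] (ζ₀ : K), IsPrimitiveRoot ζ₀ (p ^ m) →
          Algebra.adjoin ℚ_[p] {ζ₀} = ⊤ →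
          ordp p (∏ ζ ∈ ((Polynomial.nthRoots (p ^ m) (1 : K)).toFinset.erase 1),
              Polynomial.evalPadic p g (ζ - 1))
            = (lam : ℝ) * m + C := by
  subst hdeg
  have hp : p.Prime := Fact.out
  obtain ⟨K₀, _, _, _, ξ, hξ⟩ :=
    exists_primitiveRoot_finiteDimensional_normedAlgebra p (p ^ g.natDegree)
  have hξk {k} (hk : k ∈ Ioc 0 g.natDegree) := hξ.pow_pow_sub hp.pos (mem_Ioc.1 hk).2
  choose! a ha using fun k (hk : k ∈ Ioc 0 g.natDegree) =>
    (hξk hk).exists_totient_mul_ordp_evalPadic_eq_intCast (mem_Ioc.1 hk).1.ne'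
      (hne K₀ k (mem_Ioc.1 hk).1 _ (hξk hk))
  refine ⟨∑ k ∈ Ioc 0 g.natDegree, a k - g.natDegree ^ 2, g.natDegree,
    fun m hm K _ _ _ _ ζ₀ hζ₀ _ => ?_⟩
  have hζk {k} (hk : k ≤ m) := hζ₀.pow_pow_sub hp.pos hk
  have hlow : ∀ k ∈ Ioc 0 g.natDegree,
      (p ^ k).totient * ordp p (g.evalPadic p (ζ₀ ^ p ^ (m - k) - 1)) = a k := fun k hk => by
    rw [← ha k hk, ordp, ordp, (hζk ((mem_Ioc.1 hk).2.trans hm)).norm_evalPadic_sub_one_eq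
      (hξk hk) (mem_Ioc.1 hk).1.ne']
  have hhigh : ∀ k ∈ Ioc g.natDegree m,
      (p ^ k).totient * ordp p (g.evalPadic p (ζ₀ ^ p ^ (m - k) - 1)) = g.natDegree :=
    fun k hk => (hζk (mem_Ioc.1 hk).2).totient_mul_ordp_evalPadic_of_natDegree_lt hg
      (Nat.ne_zero_of_lt (mem_Ioc.1 hk).1) ((mem_Ioc.1 hk).1.trans_le (hp.le_totient_pow k))
  rw [hζ₀.ordp_prod_evalPadic_nthRoots_erase_one (hne K),
    ← sum_Ioc_consecutive _ (Nat.zero_le _) hm, sum_congr rfl hlow, sum_congr rfl hhigh,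
    sum_const, Nat.card_Ioc, nsmul_eq_mul]
  push_cast [Nat.cast_sub hm]
  ring
end
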